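/- Let M : ℝ^{mp} → A^n be a linear map into the space A^n of real symmetric n×n matrices (identified with ℝ^{n(n+1)/2} via the entries on and above the diagonal, with the Euclidean norm) that is Lipschitz with Lipschitz constant C_M with respect to the Euclidean norms, and let f : ℝ → ℝ be convex and Lipschitz with Lipschitz constant ‖f‖_L. Then the function T : ℝ^{mp} → ℝ defined by T(y) = F_{M(y)/√m}(f) is convex (hence quasi-convex) and Lipschitz with Lipschitz constant at most √(2/(nm)) · C_M · ‖f‖_L. -/

import Mathlib

/-!
For an orthogonal `U`, the diagonal of `Uᵀ A U` is the image of the eigenvalue vector `λ(A)` under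
the doubly stochastic matrix `(U j i ^ 2)`, so Jensen gives `∑ f ((Uᵀ A U) i i) ≤ ∑ f (λ i(A))` for
convex `f`. Choosing `U` to diagonalise `a • A + b • B` yields convexity of `A ↦ ∑ f (λ i(A))`.
Choosing `U` to diagonalise `A` yields
`∑ f (λ i(A)) ≤ ∑ f ((Uᵀ B U) i i) + L ∑ |(Uᵀ (A - B) U) i i| ≤ ∑ f (λ i(B)) + L √n ‖A - B‖_F`
by Cauchy–Schwarz and orthogonal invariance of the Frobenius norm. Finally
`‖X‖_F ^ 2 ≤ 2 ∑_{i ≤ j} X i j ^ 2` for symmetric `X`, which is where the factor `√2` comes from.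
-/

open scoped Matrix NNReal

/-- Spectral distribution integral `F_M(f) = (1/n) ∑_i f(λ_i(M))` of a symmetric
(Hermitian) real matrix `M`; junk value `0` for non-Hermitian matrices. -/
noncomputable def specInt {ι : Type*} [Fintype ι] [DecidableEq ι]
    (M : Matrix ι ι ℝ) (f : ℝ → ℝ) : ℝ :=
  if h : M.IsHermitian then (∑ i, f (h.eigenvalues i)) / (Fintype.card ι) else 0

open scoped Classical in
/-- The Euclidean norm of a symmetric `n × n` matrix under the identification with
`ℝ^{n(n+1)/2}` obtained by collecting the entries on and above the diagonal. -/
noncomputable def symEuclNorm {n : ℕ} (A : Matrix (Fin n) (Fin n) ℝ) : ℝ :=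
  Real.sqrt (∑ q ∈ Finset.univ.filter (fun q : Fin n × Fin n => q.1 ≤ q.2), (A q.1 q.2) ^ 2)

namespace Matrix

open Finset

variable {ι : Type*} [Fintype ι]

theorem sum_sq_diag_le_trace_conjTranspose_mul_self (X : Matrix ι ι ℝ) :
    ∑ i, X i i ^ 2 ≤ (Xᴴ * X).trace := by
  simp only [trace, diag_apply, mul_apply, conjTranspose_apply, star_trivial, ← pow_two]
  exact sum_le_sum fun i _ => single_le_sum (f := fun j => X j i ^ 2)
    (fun j _ => sq_nonneg _) (mem_univ i)

theorem sum_abs_diag_le_sqrt_card_mul_trace (X : Matrix ι ι ℝ) :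
    ∑ i, |X i i| ≤ √(Fintype.card ι * (Xᴴ * X).trace) := by
  refine Real.le_sqrt_of_sq_le ((sq_sum_le_card_mul_sum_sq).trans ?_)
  simpa only [sq_abs, card_univ] using
    mul_le_mul_of_nonneg_left (sum_sq_diag_le_trace_conjTranspose_mul_self X)
      (Nat.cast_nonneg (Fintype.card ι))

variable [DecidableEq ι]

theorem sum_sq_apply_col_of_mem_unitaryGroup {U : Matrix ι ι ℝ}
    (hU : U ∈ unitaryGroup ι ℝ) (i : ι) : ∑ j, U j i ^ 2 = 1 := by
  simpa [mul_apply, pow_two, one_apply] using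
    congrFun (congrFun (mem_unitaryGroup_iff'.mp hU) i) i

theorem sum_sq_apply_row_of_mem_unitaryGroup {U : Matrix ι ι ℝ}
    (hU : U ∈ unitaryGroup ι ℝ) (j : ι) : ∑ i, U j i ^ 2 = 1 := by
  simpa using sum_sq_apply_col_of_mem_unitaryGroup (Unitary.star_mem hU) j

theorem star_mul_diagonal_mul_apply_self (W : Matrix ι ι ℝ) (d : ι → ℝ) (i : ι) :
    (star W * diagonal d * W) i i = ∑ j, W j i ^ 2 * d j := by
  rw [mul_apply]
  simp only [mul_diagonal, star_apply, star_trivial]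
  exact sum_congr rfl fun j _ => by ring

theorem sum_convex_diag_star_mul_diagonal_mul_le {f : ℝ → ℝ} (hf : ConvexOn ℝ Set.univ f)
    {W : Matrix ι ι ℝ} (hW : W ∈ unitaryGroup ι ℝ) (d : ι → ℝ) :
    ∑ i, f ((star W * diagonal d * W) i i) ≤ ∑ i, f (d i) :=
  calc ∑ i, f ((star W * diagonal d * W) i i)
      = ∑ i, f (∑ j, W j i ^ 2 • d j) := by
        simp only [star_mul_diagonal_mul_apply_self, smul_eq_mul]
    _ ≤ ∑ i, ∑ j, W j i ^ 2 • f (d j) := sum_le_sum fun i _ =>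
        hf.map_sum_le (fun j _ => sq_nonneg _) (sum_sq_apply_col_of_mem_unitaryGroup hW i)
          fun j _ => Set.mem_univ _
    _ = ∑ i, f (d i) := by
        rw [sum_comm]
        simp only [smul_eq_mul, ← sum_mul, sum_sq_apply_row_of_mem_unitaryGroup hW, one_mul]

theorem trace_conjTranspose_mul_self_star_mul_mul {U : Matrix ι ι ℝ}
    (hU : U ∈ unitaryGroup ι ℝ) (X : Matrix ι ι ℝ) :
    ((star U * X * U)ᴴ * (star U * X * U)).trace = (Xᴴ * X).trace := by
  have hUU : U * star U = 1 := Unitary.mul_star_self_of_mem hU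
  rw [star_eq_conjTranspose] at hUU ⊢
  simp only [conjTranspose_mul, conjTranspose_conjTranspose, Matrix.mul_assoc]
  rw [← Matrix.mul_assoc U Uᴴ, hUU, Matrix.one_mul, trace_mul_comm, Matrix.mul_assoc,
    Matrix.mul_assoc, hUU, Matrix.mul_one]

namespace IsHermitian

variable {A B : Matrix ι ι ℝ}

theorem star_eigenvectorUnitary_mul_mul_eigenvectorUnitary (hA : A.IsHermitian) :
    star (hA.eigenvectorUnitary : Matrix ι ι ℝ) * A * hA.eigenvectorUnitary =
      diagonal hA.eigenvalues := by
  simpa [RCLike.ofReal_real_eq_id] using hA.conjStarAlgAut_star_eigenvectorUnitary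

theorem eigenvalues_eq_diag_conj (hA : A.IsHermitian) (i : ι) :
    hA.eigenvalues i =
      (star (hA.eigenvectorUnitary : Matrix ι ι ℝ) * A * hA.eigenvectorUnitary) i i := by
  simp [star_eigenvectorUnitary_mul_mul_eigenvectorUnitary]

theorem sum_convex_diag_conj_le {f : ℝ → ℝ} (hf : ConvexOn ℝ Set.univ f) (hA : A.IsHermitian)
    {U : Matrix ι ι ℝ} (hU : U ∈ unitaryGroup ι ℝ) :
    ∑ i, f ((star U * A * U) i i) ≤ ∑ i, f (hA.eigenvalues i) := by
  set V : Matrix ι ι ℝ := (hA.eigenvectorUnitary : Matrix ι ι ℝ)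
  have hV : V ∈ unitaryGroup ι ℝ := hA.eigenvectorUnitary.2
  have hconj : star U * A * U = star (star V * U) * diagonal hA.eigenvalues * (star V * U) := by
    conv_lhs => rw [hA.spectral_theorem]
    simp [V, RCLike.ofReal_real_eq_id, Matrix.mul_assoc]
  rw [hconj]
  exact sum_convex_diag_star_mul_diagonal_mul_le hf (mul_mem (Unitary.star_mem hV) hU) _

theorem sum_convex_eigenvalues_smul_add_smul_le {f : ℝ → ℝ} (hf : ConvexOn ℝ Set.univ f)
    (hA : A.IsHermitian) (hB : B.IsHermitian) {a b : ℝ} (ha : 0 ≤ a) (hb : 0 ≤ b)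
    (hab : a + b = 1) (hC : (a • A + b • B).IsHermitian) :
    ∑ i, f (hC.eigenvalues i) ≤ a * ∑ i, f (hA.eigenvalues i) + b * ∑ i, f (hB.eigenvalues i) := by
  set U : Matrix ι ι ℝ := (hC.eigenvectorUnitary : Matrix ι ι ℝ)
  have hU : U ∈ unitaryGroup ι ℝ := hC.eigenvectorUnitary.2
  have hsplit (i : ι) :
      hC.eigenvalues i = a * (star U * A * U) i i + b * (star U * B * U) i i := by
    simp [hC.eigenvalues_eq_diag_conj, U, Matrix.mul_add, Matrix.add_mul]
  calc ∑ i, f (hC.eigenvalues i)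
      ≤ ∑ i, (a * f ((star U * A * U) i i) + b * f ((star U * B * U) i i)) :=
        sum_le_sum fun i _ => by
          simpa only [hsplit, smul_eq_mul] using
            hf.2 (Set.mem_univ _) (Set.mem_univ _) ha hb hab
    _ = a * ∑ i, f ((star U * A * U) i i) + b * ∑ i, f ((star U * B * U) i i) := by
        rw [sum_add_distrib, mul_sum, mul_sum]
    _ ≤ a * ∑ i, f (hA.eigenvalues i) + b * ∑ i, f (hB.eigenvalues i) := by
        have hAU := hA.sum_convex_diag_conj_le hf hU
        have hBU := hB.sum_convex_diag_conj_le hf hU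
        gcongr

theorem sum_eigenvalues_le_add_sum_abs_diag {f : ℝ → ℝ} {L : ℝ≥0} (hf : ConvexOn ℝ Set.univ f)
    (hlip : LipschitzWith L f) (hA : A.IsHermitian) (hB : B.IsHermitian) :
    ∑ i, f (hA.eigenvalues i) ≤ ∑ i, f (hB.eigenvalues i) +
      L * ∑ i, |(star (hA.eigenvectorUnitary : Matrix ι ι ℝ) * (A - B) *
        hA.eigenvectorUnitary) i i| := by
  set U : Matrix ι ι ℝ := (hA.eigenvectorUnitary : Matrix ι ι ℝ)
  have hU : U ∈ unitaryGroup ι ℝ := hA.eigenvectorUnitary.2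
  have hstep (i : ι) : f (hA.eigenvalues i) ≤
      f ((star U * B * U) i i) + L * |(star U * (A - B) * U) i i| := by
    have hsplit : hA.eigenvalues i = (star U * B * U) i i + (star U * (A - B) * U) i i := by
      simp [hA.eigenvalues_eq_diag_conj, U, Matrix.mul_sub, Matrix.sub_mul]
    calc f (hA.eigenvalues i)
        ≤ f ((star U * B * U) i i) + L * dist (hA.eigenvalues i) ((star U * B * U) i i) :=
          hlip.le_add_mul _ _
      _ = _ := by rw [Real.dist_eq, hsplit, add_sub_cancel_left]
  calc ∑ i, f (hA.eigenvalues i)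
      ≤ ∑ i, f ((star U * B * U) i i) + L * ∑ i, |(star U * (A - B) * U) i i| := by
        rw [mul_sum, ← sum_add_distrib]
        exact sum_le_sum fun i _ => hstep i
    _ ≤ _ := by grw [hB.sum_convex_diag_conj_le hf hU]

end IsHermitian

end Matrix

section SpecInt

open Finset Matrix

theorem convex_setOf_isHermitian {ι : Type*} : Convex ℝ {A : Matrix ι ι ℝ | A.IsHermitian} :=
  fun _ hA _ hB a b _ _ _ => (hA.smul (IsSelfAdjoint.all a)).add (hB.smul (IsSelfAdjoint.all b))

variable {ι : Type*} [Fintype ι] [DecidableEq ι] {A B : Matrix ι ι ℝ} {f : ℝ → ℝ}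

theorem specInt_of_isHermitian (hA : A.IsHermitian) (f : ℝ → ℝ) :
    specInt A f = (∑ i, f (hA.eigenvalues i)) / Fintype.card ι :=
  dif_pos hA

theorem convexOn_specInt (hf : ConvexOn ℝ Set.univ f) :
    ConvexOn ℝ {A : Matrix ι ι ℝ | A.IsHermitian} (specInt · f) := by
  refine ⟨convex_setOf_isHermitian, fun A hA B hB a b ha hb hab => ?_⟩
  have hC : (a • A + b • B).IsHermitian := convex_setOf_isHermitian hA hB ha hb hab
  simp only [specInt_of_isHermitian hA, specInt_of_isHermitian hB, specInt_of_isHermitian hC,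
    smul_eq_mul, mul_div_assoc', ← add_div]
  gcongr
  exact IsHermitian.sum_convex_eigenvalues_smul_add_smul_le hf hA hB ha hb hab hC

theorem specInt_sub_le {L : ℝ≥0} (hf : ConvexOn ℝ Set.univ f) (hlip : LipschitzWith L f)
    (hA : A.IsHermitian) (hB : B.IsHermitian) :
    specInt A f - specInt B f ≤ L * √(((A - B)ᴴ * (A - B)).trace / Fintype.card ι) := by
  set c : ℝ := (Fintype.card ι : ℝ)
  set t : ℝ := ((A - B)ᴴ * (A - B)).trace
  rw [specInt_of_isHermitian hA, specInt_of_isHermitian hB, ← sub_div]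
  refine div_le_of_le_mul₀ (Nat.cast_nonneg _) (by positivity) ?_
  have hct : √(c * t) = √(t / c) * c := by
    have hc : 0 ≤ c := Nat.cast_nonneg _
    rcases hc.eq_or_lt with hc | hc
    · simp [← hc]
    · calc √(c * t) = √(t / c * c ^ 2) := by congr 1; field_simp
        _ = √(t / c) * c := by rw [Real.sqrt_mul' _ (sq_nonneg c), Real.sqrt_sq hc.le]
  calc ∑ i, f (hA.eigenvalues i) - ∑ i, f (hB.eigenvalues i)
      ≤ L * ∑ i, |(star (hA.eigenvectorUnitary : Matrix ι ι ℝ) * (A - B) *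
          hA.eigenvectorUnitary) i i| := by
        linarith [hA.sum_eigenvalues_le_add_sum_abs_diag hf hlip hB]
    _ ≤ L * √(c * t) := by
        grw [sum_abs_diag_le_sqrt_card_mul_trace, trace_conjTranspose_mul_self_star_mul_mul
          hA.eigenvectorUnitary.2]
    _ = L * √(t / c) * c := by rw [hct, mul_assoc]

theorem abs_specInt_sub_le {L : ℝ≥0} (hf : ConvexOn ℝ Set.univ f) (hlip : LipschitzWith L f)
    (hA : A.IsHermitian) (hB : B.IsHermitian) :
    |specInt A f - specInt B f| ≤ L * √(((A - B)ᴴ * (A - B)).trace / Fintype.card ι) := by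
  refine abs_sub_le_iff.mpr ⟨specInt_sub_le hf hlip hA hB, ?_⟩
  have hsymm : (B - A)ᴴ * (B - A) = (A - B)ᴴ * (A - B) := by
    rw [← neg_sub A B, conjTranspose_neg, neg_mul_neg]
  simpa only [hsymm] using specInt_sub_le hf hlip hB hA

end SpecInt

theorem symEuclNorm_nonneg {n : ℕ} (A : Matrix (Fin n) (Fin n) ℝ) : 0 ≤ symEuclNorm A :=
  Real.sqrt_nonneg _

open Finset in
open scoped Classical in
theorem Matrix.IsHermitian.trace_conjTranspose_mul_self_le_two_mul_symEuclNorm_sq {n : ℕ}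
    {A : Matrix (Fin n) (Fin n) ℝ} (hA : A.IsHermitian) :
    (Aᴴ * A).trace ≤ 2 * symEuclNorm A ^ 2 := by
  set S := ∑ q ∈ univ.filter (fun q : Fin n × Fin n => q.1 ≤ q.2), A q.1 q.2 ^ 2
  have hS : symEuclNorm A ^ 2 = S := Real.sq_sqrt (by positivity)
  have htrace : (Aᴴ * A).trace = S + ∑ q ∈ univ.filter (fun q : Fin n × Fin n => ¬ q.1 ≤ q.2),
      A q.1 q.2 ^ 2 := by
    rw [sum_filter_add_sum_filter_not, ← univ_product_univ, sum_product, sum_comm]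
    simp [Matrix.trace, Matrix.mul_apply, pow_two]
  have hlower : ∑ q ∈ univ.filter (fun q : Fin n × Fin n => ¬ q.1 ≤ q.2), A q.1 q.2 ^ 2 ≤ S :=
    calc _ = ∑ q ∈ univ.filter (fun q : Fin n × Fin n => q.1 < q.2), A q.1 q.2 ^ 2 :=
          sum_equiv (Equiv.prodComm _ _) (by simp) fun q _ => by
            simpa using congrArg (· ^ 2) (hA.apply q.2 q.1)
      _ ≤ S := sum_le_sum_of_subset_of_nonneg (monotone_filter_right _ fun _ _ => le_of_lt)
          fun _ _ _ => sq_nonneg _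
  linarith

theorem specInt_comp_linear_convex_lipschitz_general (m n p : ℕ)
    (M : EuclideanSpace ℝ (Fin m × Fin p) → Matrix (Fin n) (Fin n) ℝ)
    (hsym : ∀ y, (M y).IsHermitian)
    (hlin : IsLinearMap ℝ M)
    (C : ℝ) (hlipM : ∀ y z, symEuclNorm (M y - M z) ≤ C * dist y z)
    (f : ℝ → ℝ) (L : ℝ≥0)
    (hconv : ConvexOn ℝ Set.univ f) (hlip : LipschitzWith L f) :
    ConvexOn ℝ Set.univ (fun y => specInt ((Real.sqrt m)⁻¹ • M y) f) ∧
      QuasiconvexOn ℝ Set.univ (fun y => specInt ((Real.sqrt m)⁻¹ • M y) f) ∧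
      ∀ y z, |specInt ((Real.sqrt m)⁻¹ • M y) f - specInt ((Real.sqrt m)⁻¹ • M z) f|
        ≤ Real.sqrt (2 / ((n : ℝ) * m)) * C * (L : ℝ) * dist y z := by
  set T : EuclideanSpace ℝ (Fin m × Fin p) →ₗ[ℝ] Matrix (Fin n) (Fin n) ℝ :=
    (Real.sqrt m)⁻¹ • hlin.mk' M
  have hTapply (y) : T y = (Real.sqrt m)⁻¹ • M y := rfl
  have hT (y) : (T y).IsHermitian := hTapply y ▸ (hsym y).smul (IsSelfAdjoint.all _)
  have hconvT : ConvexOn ℝ Set.univ (fun y => specInt ((Real.sqrt m)⁻¹ • M y) f) := by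
    have hpre : T ⁻¹' {A | A.IsHermitian} = Set.univ := Set.eq_univ_of_forall hT
    exact hpre ▸ (convexOn_specInt hconv).comp_linearMap T
  refine ⟨hconvT, hconvT.quasiconvexOn, fun y z => ?_⟩
  have hsymEucl := symEuclNorm_nonneg (M y - M z)
  have hCd : 0 ≤ C * dist y z := hsymEucl.trans (hlipM y z)
  have htrace : ((M y - M z)ᴴ * (M y - M z)).trace ≤ 2 * (C * dist y z) ^ 2 := by
    grw [((hsym y).sub (hsym z)).trace_conjTranspose_mul_self_le_two_mul_symEuclNorm_sq,
      hlipM y z]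
  calc |specInt (T y) f - specInt (T z) f|
      ≤ L * √(((T y - T z)ᴴ * (T y - T z)).trace / n) := by
        simpa only [Fintype.card_fin] using abs_specInt_sub_le hconv hlip (hT y) (hT z)
    _ = L * √(((M y - M z)ᴴ * (M y - M z)).trace / (n * m)) := by
        simp only [hTapply, ← smul_sub, Matrix.conjTranspose_smul, star_trivial,
          smul_mul_smul_comm, Matrix.trace_smul, smul_eq_mul, ← mul_inv,
          Real.mul_self_sqrt (Nat.cast_nonneg m)]
        ring_nf
    _ ≤ L * √(2 * (C * dist y z) ^ 2 / (n * m)) := by gcongr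
    _ = _ := by
        rw [mul_div_right_comm, Real.sqrt_mul' _ (sq_nonneg _), Real.sqrt_sq hCd]
        ring

/-- If `M : ℝ^{mp} → A^n` is a linear, Lipschitz (with constant `C`, w.r.t. the
Euclidean norms) map into the real symmetric `n × n` matrices, and `f : ℝ → ℝ` is
convex and Lipschitz with constant `L`, then `T(y) = F_{M(y)/√m}(f)` is convex
(hence quasi-convex) and Lipschitz with constant at most `√(2/(nm)) · C · L`. -/
theorem specInt_comp_linear_convex_lipschitz (m n p : ℕ) (hm : 0 < m) (hn : 0 < n)
    (M : EuclideanSpace ℝ (Fin m × Fin p) → Matrix (Fin n) (Fin n) ℝ)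
    (hsym : ∀ y, (M y).IsHermitian)
    (hlin : IsLinearMap ℝ M)
    (C : ℝ) (hlipM : ∀ y z, symEuclNorm (M y - M z) ≤ C * dist y z)
    (f : ℝ → ℝ) (L : ℝ≥0)
    (hconv : ConvexOn ℝ Set.univ f) (hlip : LipschitzWith L f) :
    ConvexOn ℝ Set.univ (fun y => specInt ((Real.sqrt m)⁻¹ • M y) f) ∧
      QuasiconvexOn ℝ Set.univ (fun y => specInt ((Real.sqrt m)⁻¹ • M y) f) ∧
      ∀ y z, |specInt ((Real.sqrt m)⁻¹ • M y) f - specInt ((Real.sqrt m)⁻¹ • M z) f|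
        ≤ Real.sqrt (2 / ((n : ℝ) * m)) * C * (L : ℝ) * dist y z :=
  specInt_comp_linear_convex_lipschitz_general m n p M hsym hlin C hlipM f L hconv hlip
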